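/- arXiv:1810.07061 — 3 statements merged into one kernel-verified Lean document; each statement's English description precedes it below -/
import Mathlib

section
/- Let (q_n) be a sequence of polynomials of degree at most M with Σ_{k=0}^{M}|λ_{n,k}| = 1 (coefficient normalization), and let Q be a fixed nonzero polynomial of degree M. Suppose there are scalars λ_n (the leading coefficients λ_{n,M} of q_n) such that q_n − λ_n Q → 0 uniformly on some compact set with infinitely many points, as n → ∞. Then liminf_{n→∞} |λ_n| > 0. -/
/-!
Fix `M + 1` distinct points `zᵢ` of `K`. Evaluation at these points is an injective linear map
on polynomials of degree at most `M` (its matrix is an invertible Vandermonde matrix), hence it is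
bounded below: coefficient vectors of `ℓ¹`-norm one have value vectors of norm at least some
`c > 0`. Since `q n (zᵢ) - λ_n Q(zᵢ) → 0`, eventually `c / 2 ≤ |λ_n| ‖(Q(zᵢ))ᵢ‖`.
-/

open Polynomial Filter Topology

section Vandermonde

open Matrix

variable {n : ℕ}

theorem Matrix.vandermonde_mulVec_coeff {R : Type*} [CommRing R] (z : Fin n → R) {p : R[X]}
    (hp : p.natDegree < n) : vandermonde z *ᵥ (fun k => p.coeff k) = fun i => p.eval (z i) := by
  ext i
  rw [eval_eq_sum_range' hp, ← Fin.sum_univ_eq_sum_range]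
  simp only [mulVec, dotProduct, vandermonde_apply, mul_comm]

variable {𝕜 : Type*} [NontriviallyNormedField 𝕜] [CompleteSpace 𝕜]

theorem Matrix.exists_pos_mul_norm_le_norm_vandermonde_mulVec {z : Fin n → 𝕜}
    (hz : Function.Injective z) :
    ∃ c > 0, ∀ v : Fin n → 𝕜, c * ‖v‖ ≤ ‖vandermonde z *ᵥ v‖ := by
  have hinj : Function.Injective (vandermonde z).mulVecLin :=
    mulVec_injective_iff_isUnit.2 <|
      (isUnit_iff_isUnit_det _).2 (det_vandermonde_ne_zero_iff.2 hz).isUnit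
  obtain ⟨K, -, hK⟩ := (LinearMap.injective_iff_antilipschitz _).1 hinj
  exact antilipschitzWith_iff_exists_mul_le_norm.1 ⟨K, hK⟩

theorem Polynomial.exists_pos_mul_sum_norm_coeff_le_norm_eval {z : Fin n → 𝕜} (hz : Function.Injective z) :
    ∃ c > 0, ∀ p : 𝕜[X], p.natDegree < n →
      c * ∑ k ∈ Finset.range n, ‖p.coeff k‖ ≤ ‖fun i => p.eval (z i)‖ := by
  obtain ⟨c, hc, hbound⟩ := exists_pos_mul_norm_le_norm_vandermonde_mulVec hz
  refine ⟨c / (n + 1), by positivity, fun p hp => ?_⟩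
  have hsum : ∑ k ∈ Finset.range n, ‖p.coeff k‖ ≤ (n + 1) * ‖fun k : Fin n => p.coeff k‖ := by
    rw [← Fin.sum_univ_eq_sum_range (fun k => ‖p.coeff k‖)]
    refine (Pi.sum_norm_apply_le_norm _).trans ?_
    simp only [Fintype.card_fin, nsmul_eq_mul]
    gcongr
    linarith
  calc c / (n + 1) * ∑ k ∈ Finset.range n, ‖p.coeff k‖
      ≤ c / (n + 1) * ((n + 1) * ‖fun k : Fin n => p.coeff k‖) := by gcongr
    _ = c * ‖fun k : Fin n => p.coeff k‖ := by field_simp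
    _ ≤ ‖fun i => p.eval (z i)‖ := by
      rw [← vandermonde_mulVec_coeff z hp]
      exact hbound _

end Vandermonde

theorem exists_pos_eventually_le_norm_of_tendsto_sub_smul {α 𝕜 E : Type*} [NormedField 𝕜]
    [SeminormedAddCommGroup E] [NormedSpace 𝕜 E] {l : Filter α} {u : α → E} {a : α → 𝕜} {w : E}
    {δ : ℝ} (hδ : 0 < δ) (hu : ∀ n, δ ≤ ‖u n‖) (hlim : Tendsto (fun n => u n - a n • w) l (𝓝 0)) :
    ∃ η > 0, ∀ᶠ n in l, η ≤ ‖a n‖ := by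
  refine ⟨δ / (2 * (‖w‖ + 1)), by positivity, ?_⟩
  filter_upwards [(tendsto_zero_iff_norm_tendsto_zero.1 hlim).eventually_lt_const (half_pos hδ)]
    with n hn
  have hsmul : δ / 2 < ‖a n‖ * (‖w‖ + 1) :=
    calc δ / 2 < ‖u n‖ - ‖u n - a n • w‖ := by linarith [hu n]
      _ ≤ ‖a n • w‖ := by simpa using norm_sub_norm_le (u n) (u n - a n • w)
      _ ≤ ‖a n‖ * (‖w‖ + 1) := by rw [norm_smul]; gcongr; linarith
  rw [div_le_iff₀ (by positivity)]
  linarith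

theorem stmt4_general (M : ℕ) (q : ℕ → ℂ[X]) (hdeg : ∀ n, (q n).natDegree ≤ M)
    (hnorm : ∀ n, ∑ k ∈ Finset.range (M + 1), ‖(q n).coeff k‖ = 1)
    (Q : ℂ[X])
    (K : Set ℂ) (hKinf : K.Infinite)
    (hconv : TendstoUniformlyOn
      (fun n z => (q n).eval z - (q n).coeff M * Q.eval z) 0 atTop K) :
    0 < Filter.liminf (fun n => ‖(q n).coeff M‖) atTop := by
  obtain ⟨z, hzK, hz⟩ : ∃ z : Fin (M + 1) → ℂ, (∀ i, z i ∈ K) ∧ Function.Injective z :=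
    ⟨fun i => hKinf.natEmbedding K i, fun i => (hKinf.natEmbedding K i).2,
      Subtype.val_injective.comp ((hKinf.natEmbedding K).injective.comp Fin.val_injective)⟩
  obtain ⟨c, hc, hcoeff⟩ := exists_pos_mul_sum_norm_coeff_le_norm_eval hz
  have hsep (n : ℕ) : c ≤ ‖fun i => (q n).eval (z i)‖ := by
    simpa [hnorm n] using hcoeff (q n) (Nat.lt_succ_of_le (hdeg n))
  have hlim : Tendsto (fun n => (fun i => (q n).eval (z i)) - (q n).coeff M • fun i => Q.eval (z i))
      atTop (𝓝 0) :=
    tendsto_pi_nhds.2 fun i => hconv.tendsto_at (hzK i)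
  obtain ⟨η, hη, hev⟩ := exists_pos_eventually_le_norm_of_tendsto_sub_smul hc hsep hlim
  have hbdd : IsCoboundedUnder (· ≥ ·) atTop fun n => ‖(q n).coeff M‖ :=
    isCoboundedUnder_ge_of_le atTop fun n => hnorm n ▸
      Finset.single_le_sum (fun k _ => norm_nonneg _) (Finset.self_mem_range_succ M)
  exact hη.trans_le (le_liminf_of_le hbdd hev)

/-- If `q_n` are polynomials of degree at most `M` with coefficient normalization
`Σ_{k=0}^{M} |λ_{n,k}| = 1`, `Q` is a fixed nonzero polynomial of degree `M`, and
`q_n − λ_{n,M} Q → 0` uniformly on a compact set with infinitely many points,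
then `liminf_n |λ_{n,M}| > 0`. -/
theorem stmt4 (M : ℕ) (q : ℕ → ℂ[X]) (hdeg : ∀ n, (q n).natDegree ≤ M)
    (hnorm : ∀ n, ∑ k ∈ Finset.range (M + 1), ‖(q n).coeff k‖ = 1)
    (Q : ℂ[X]) (hQ : Q ≠ 0) (hQdeg : Q.natDegree = M)
    (K : Set ℂ) (hK : IsCompact K) (hKinf : K.Infinite)
    (hconv : TendstoUniformlyOn
      (fun n z => (q n).eval z - (q n).coeff M * Q.eval z) 0 atTop K) :
    0 < Filter.liminf (fun n => ‖(q n).coeff M‖) atTop :=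
  stmt4_general M q hdeg hnorm Q K hKinf hconv
end

section
/- Let f = (f₁,…,f_d) be holomorphic on a neighborhood of a compact continuum E and m = (m₁,…,m_d) ∈ ℕ^d. If for all n ≥ n₀ the common denominator Q_{n,m} of every multipoint Hermite–Padé approximant of f is unique and has degree exactly |m|, then f is polynomially independent with respect to m. -/
/-!
Suppose `∑ p_k f_k = P` with `deg p_k < m_k`, not all `p_k` zero, and take `n` large. Hermite
interpolation of `q f_k` at the zeros of `a_{n+1}` is linear in `q`, and a nonzero `q` of
degree `≤ |m|` is a denominator iff the `|m|` coefficients of degrees `n - m_k < t ≤ n` of these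
interpolants vanish. Reducing `∑ p_k · (interpolant of q f_k) ≡ q P` modulo `a_{n+1}` and reading
off the coefficient of `X ^ n` gives a nontrivial linear relation among these `|m|` conditions, so
they have a nonzero solution among the polynomials of degree `< |m|`. Normalised, it is a monic
denominator of degree `< |m|`, contradicting uniqueness of the one of degree `|m|`.
-/

open Polynomial

/-- `Q` is a denominator of a multipoint Hermite–Padé approximant of the system
`f = (f₁,…,f_d)` (holomorphic on the open set `U ⊇ E`) with respect to the multi-index `m`
and the interpolation polynomials `a` (with `a (n+1)` monic of degree `n+1` and zeros in
`E`): `Q ≢ 0`, `deg Q ≤ |m|`, and for each `k` there is `P_k` with `deg P_k ≤ n − m_k`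
such that `(Q f_k − P_k)/a_{n+1}` is holomorphic on a neighborhood of `E`. -/
def IsMHPDenominator (E U : Set ℂ) (d : ℕ) (f : Fin d → ℂ → ℂ) (m : Fin d → ℕ)
    (a : ℕ → ℂ[X]) (n : ℕ) (Q : ℂ[X]) : Prop :=
  Q ≠ 0 ∧ Q.natDegree ≤ ∑ k, m k ∧
    ∀ k : Fin d, ∃ P : ℂ[X], P.degree ≤ (n - m k : ℕ) ∧
      ∃ V : Set ℂ, IsOpen V ∧ E ⊆ V ∧ V ⊆ U ∧
        ∃ g : ℂ → ℂ, DifferentiableOn ℂ g V ∧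
          ∀ z ∈ V, Q.eval z * f k z - P.eval z = (a (n+1)).eval z * g z

open Module

section Interpolation

variable {V : Set ℂ}

theorem multiset_prod_X_sub_C_dvd_of_eval_eq_mul (hV : IsOpen V) {s : Multiset ℂ}
    (hs : ∀ r ∈ s, r ∈ V) {D : ℂ[X]} {h : ℂ → ℂ} (hh : ContinuousOn h V)
    (hD : ∀ z ∈ V, D.eval z = (s.map fun r => X - C r).prod.eval z * h z) :
    (s.map fun r => X - C r).prod ∣ D := by
  induction s using Multiset.induction_on generalizing D with
  | empty => simp
  | cons r s ih =>
    have hrV : r ∈ V := hs r (Multiset.mem_cons_self r s)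
    obtain ⟨D₁, rfl⟩ : X - C r ∣ D := dvd_iff_isRoot.mpr (by simpa using hD r hrV)
    set b := (s.map fun r => X - C r).prod
    have hD₁ : ∀ z ∈ V, D₁.eval z = b.eval z * h z := by
      have hne : ∀ z ∈ V, z ≠ r → D₁.eval z = b.eval z * h z := fun z hz hzr =>
        mul_left_cancel₀ (sub_ne_zero.mpr hzr) (by simpa [b, mul_assoc] using hD z hz)
      intro z hz
      rcases eq_or_ne z r with rfl | hzr
      · refine ((D₁.continuousAt.eventuallyEq_nhds_iff_eventuallyEq_nhdsNE
          (b.continuousAt.mul (hh.continuousAt (hV.mem_nhds hz)))).mp ?_).eq_of_nhds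
        exact eventually_nhdsWithin_iff.mpr
          (Filter.eventually_of_mem (hV.mem_nhds hz) fun w hw hwz => hne w hw hwz)
      · exact hne z hz hzr
    simpa [Multiset.map_cons, Multiset.prod_cons] using
      mul_dvd_mul_left (X - C r) (ih (fun r hr => hs r (Multiset.mem_cons_of_mem hr)) hD₁)

theorem exists_eq_add_multiset_prod_X_sub_C_mul (hV : IsOpen V) {s : Multiset ℂ}
    (hs : ∀ r ∈ s, r ∈ V) {g : ℂ → ℂ} (hg : DifferentiableOn ℂ g V) :
    ∃ T : ℂ[X], T.degree < s.card ∧ ∃ h : ℂ → ℂ, DifferentiableOn ℂ h V ∧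
      ∀ z ∈ V, g z = T.eval z + (s.map fun r => X - C r).prod.eval z * h z := by
  induction s using Multiset.induction_on generalizing g with
  | empty => exact ⟨0, by simp, g, hg, by simp⟩
  | cons r s ih =>
    have hrV : r ∈ V := hs r (Multiset.mem_cons_self r s)
    obtain ⟨T, hT, h, hh, hgT⟩ := ih (fun r hr => hs r (Multiset.mem_cons_of_mem hr))
      ((Complex.differentiableOn_dslope (hV.mem_nhds hrV)).mpr hg)
    refine ⟨C (g r) + (X - C r) * T, ?_, h, hh, fun z hz => ?_⟩
    · rw [Multiset.card_cons]
      refine (degree_add_le _ _).trans_lt (max_lt (degree_C_le.trans_lt ?_) ?_)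
      · exact_mod_cast Nat.succ_pos _
      · rw [degree_mul, degree_X_sub_C, Nat.cast_add, Nat.cast_one, add_comm (s.card : WithBot ℕ)]
        exact WithBot.add_lt_add_left WithBot.one_ne_bot hT
    · have hslope : (z - r) * dslope g r z = g z - g r := sub_smul_dslope g r z
      simp only [Multiset.map_cons, Multiset.prod_cons, eval_add, eval_mul, eval_C, eval_sub,
        eval_X]
      linear_combination -hslope + (z - r) * hgT z hz

theorem Polynomial.Monic.dvd_of_eval_eq_mul {b : ℂ[X]} (hb : b.Monic) (hV : IsOpen V)
    (hroots : ∀ r ∈ b.roots, r ∈ V) {D : ℂ[X]} {h : ℂ → ℂ} (hh : ContinuousOn h V)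
    (hD : ∀ z ∈ V, D.eval z = b.eval z * h z) : b ∣ D := by
  rw [(IsAlgClosed.splits b).eq_prod_roots_of_monic hb] at hD ⊢
  exact multiset_prod_X_sub_C_dvd_of_eval_eq_mul hV hroots hh hD

def IsHermiteInterpolant (V : Set ℂ) (b : ℂ[X]) (g : ℂ → ℂ) (T : ℂ[X]) : Prop :=
  T.degree < b.degree ∧
    ∃ h : ℂ → ℂ, DifferentiableOn ℂ h V ∧ ∀ z ∈ V, g z = T.eval z + b.eval z * h z

theorem Polynomial.Monic.exists_isHermiteInterpolant {b : ℂ[X]} (hb : b.Monic) (hV : IsOpen V)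
    (hroots : ∀ r ∈ b.roots, r ∈ V) {g : ℂ → ℂ} (hg : DifferentiableOn ℂ g V) :
    ∃ T, IsHermiteInterpolant V b g T := by
  have hprod := (IsAlgClosed.splits b).eq_prod_roots_of_monic hb
  obtain ⟨T, hT, hgT⟩ := exists_eq_add_multiset_prod_X_sub_C_mul hV hroots hg
  refine ⟨T, ?_, by rwa [hprod]⟩
  rwa [degree_eq_natDegree hb.ne_zero, (IsAlgClosed.splits b).natDegree_eq_card_roots]

namespace IsHermiteInterpolant

variable {b : ℂ[X]} {g g₁ g₂ : ℂ → ℂ} {T T₁ T₂ : ℂ[X]}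

theorem add (h₁ : IsHermiteInterpolant V b g₁ T₁) (h₂ : IsHermiteInterpolant V b g₂ T₂) :
    IsHermiteInterpolant V b (fun z => g₁ z + g₂ z) (T₁ + T₂) := by
  obtain ⟨hT₁, k₁, hk₁, he₁⟩ := h₁
  obtain ⟨hT₂, k₂, hk₂, he₂⟩ := h₂
  refine ⟨(degree_add_le _ _).trans_lt (max_lt hT₁ hT₂), fun z => k₁ z + k₂ z, hk₁.add hk₂,
    fun z hz => ?_⟩
  beta_reduce
  rw [he₁ z hz, he₂ z hz, eval_add]
  ring

theorem const_mul (c : ℂ) (h : IsHermiteInterpolant V b g T) :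
    IsHermiteInterpolant V b (fun z => c * g z) (c • T) := by
  obtain ⟨hT, k, hk, he⟩ := h
  refine ⟨(degree_smul_le _ _).trans_lt hT, fun z => c * k z, hk.const_mul c, fun z hz => ?_⟩
  beta_reduce
  rw [he z hz, eval_smul, smul_eq_mul]
  ring

theorem unique (hb : b.Monic) (hV : IsOpen V) (hroots : ∀ r ∈ b.roots, r ∈ V)
    (h₁ : IsHermiteInterpolant V b g T₁) (h₂ : IsHermiteInterpolant V b g T₂) : T₁ = T₂ := by
  obtain ⟨hT₁, k₁, hk₁, he₁⟩ := h₁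
  obtain ⟨hT₂, k₂, hk₂, he₂⟩ := h₂
  have hdvd : b ∣ T₁ - T₂ := hb.dvd_of_eval_eq_mul hV hroots (hk₂.continuousOn.sub hk₁.continuousOn)
    fun z hz => by rw [eval_sub, Pi.sub_apply]; linear_combination he₂ z hz - he₁ z hz
  exact sub_eq_zero.mp <| eq_zero_of_dvd_of_degree_lt hdvd <|
    (degree_sub_le _ _).trans_lt (max_lt hT₁ hT₂)

end IsHermiteInterpolant

theorem Polynomial.Monic.exists_linearMap_isHermiteInterpolant {b : ℂ[X]} (hb : b.Monic)
    (hV : IsOpen V) (hroots : ∀ r ∈ b.roots, r ∈ V) {f : ℂ → ℂ} (hf : DifferentiableOn ℂ f V) :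
    ∃ T : ℂ[X] →ₗ[ℂ] ℂ[X], ∀ q, IsHermiteInterpolant V b (fun z => q.eval z * f z) (T q) := by
  choose T hT using fun q : ℂ[X] =>
    hb.exists_isHermiteInterpolant (g := fun z => q.eval z * f z) hV hroots
      (q.differentiableOn.mul hf)
  refine ⟨{ toFun := T, map_add' := fun q₁ q₂ => ?_, map_smul' := fun c q => ?_ }, hT⟩
  · refine (hT _).unique hb hV hroots ?_
    simpa only [eval_add, add_mul] using (hT q₁).add (hT q₂)
  · refine (hT _).unique hb hV hroots ?_
    simpa only [eval_smul, smul_eq_mul, mul_assoc, RingHom.id_apply] using (hT q).const_mul c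

end Interpolation

theorem LinearMap.exists_ne_zero_map_eq_zero_of_comp_eq_zero {K V W : Type*} [Field K]
    [AddCommGroup V] [Module K V] [AddCommGroup W] [Module K W] [FiniteDimensional K V]
    [FiniteDimensional K W] {L : V →ₗ[K] W} {μ : W →ₗ[K] K} (hμ : μ ≠ 0) (hμL : μ ∘ₗ L = 0)
    (hdim : finrank K W ≤ finrank K V) : ∃ v ≠ 0, L v = 0 := by
  have hker : finrank K (ker μ) < finrank K V :=
    (Submodule.finrank_lt (mt ker_eq_top.mp hμ)).trans_le hdim
  obtain ⟨v, hv, hv0⟩ := Submodule.exists_mem_ne_zero_of_ne_bot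
    (ker_ne_bot_of_finrank_lt (f := L.codRestrict (ker μ) fun v => congr($hμL v)) hker)
  exact ⟨v, hv0, by simpa [ker_codRestrict] using hv⟩

theorem Polynomial.natDegree_sub_sum_Ico_le {R : Type*} [Ring R] {p : R[X]} {j N : ℕ}
    (hp : p.natDegree ≤ N) :
    (p - ∑ t ∈ Finset.Ico (j + 1) (N + 1), C (p.coeff t) * X ^ t).natDegree ≤ j := by
  refine natDegree_le_iff_coeff_eq_zero.mpr fun t ht => ?_
  simp only [coeff_sub, finsetSum_coeff, coeff_C_mul_X_pow, Finset.sum_ite_eq, Finset.mem_Ico]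
  split_ifs with h
  · exact sub_self _
  · rw [coeff_eq_zero_of_natDegree_lt (by omega), sub_zero]

theorem Polynomial.coeff_modByMonic_eq_zero_of_dvd_sub {R : Type*} [CommRing R] [Nontrivial R]
    {A B b : R[X]} (hb : b.Monic) (h : b ∣ A - B) {n : ℕ} (hBn : B.natDegree < n)
    (hnb : n < b.natDegree) : (A %ₘ b).coeff n = 0 := by
  rw [modByMonic_eq_of_dvd_sub hb h,
    (modByMonic_eq_self_iff hb).mpr (degree_lt_degree (hBn.trans hnb))]
  exact coeff_eq_zero_of_natDegree_lt hBn

section HermitePade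

variable {d : ℕ} (m : Fin d → ℕ) (n : ℕ)

/-- The pairs `(k, t)` with `n - m k < t ≤ n`: a denominator `Q` of index `n` is characterised
by the vanishing of the coefficient of `X ^ t` in the interpolant of `Q f_k`. -/
abbrev HighIndex : Type := (k : Fin d) × Finset.Ico (n - m k + 1) (n + 1)

noncomputable def highCoeffs (T : Fin d → ℂ[X] →ₗ[ℂ] ℂ[X]) : ℂ[X] →ₗ[ℂ] (HighIndex m n → ℂ) :=
  LinearMap.pi fun s => lcoeff ℂ (s.2 : ℕ) ∘ₗ T s.1

/-- The coefficient of `X ^ n` in `(∑ c_{k,t} p_k X ^ t) mod b`; when `∑ p_k f_k = P` it vanishes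
on the range of `highCoeffs`, i.e. it is a linear relation among the conditions. -/
noncomputable def relationFunctional (p : Fin d → ℂ[X]) (b : ℂ[X]) : (HighIndex m n → ℂ) →ₗ[ℂ] ℂ :=
  lcoeff ℂ n ∘ₗ modByMonicHom b ∘ₗ Fintype.linearCombination ℂ fun s => p s.1 * X ^ (s.2 : ℕ)

variable {m n}

theorem card_highIndex (hmn : ∀ k, m k ≤ n) : Fintype.card (HighIndex m n) = ∑ k, m k := by
  simp only [Fintype.card_sigma, Fintype.card_coe, Nat.card_Ico]
  exact Finset.sum_congr rfl fun k _ => by have := hmn k; omega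

theorem relationFunctional_ne_zero {p : Fin d → ℂ[X]} {b : ℂ[X]} (hb : b.Monic)
    (hbdeg : b.natDegree = n + 1) (hpdeg : ∀ k, (p k).degree < m k) {j : Fin d} (hpj : p j ≠ 0)
    (hmn : m j ≤ n) : relationFunctional m n p b ≠ 0 := by
  have hej : (p j).natDegree < m j := (natDegree_lt_iff_degree_lt hpj).mpr (hpdeg j)
  set e := (p j).natDegree
  have hdeg : (p j * X ^ (n - e)).degree < b.degree :=
    degree_lt_degree (by rw [natDegree_mul_X_pow _ hpj]; omega)
  have hcoeff : (p j * X ^ (n - e)).coeff n = (p j).leadingCoeff := by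
    have := coeff_mul_X_pow (p j) (n - e) e
    rw [Nat.add_sub_cancel' (by omega : e ≤ n)] at this
    exact this
  intro h
  have := congr(($h) (Pi.single ⟨j, n - e, Finset.mem_Ico.mpr ⟨by omega, by omega⟩⟩ 1))
  simp only [relationFunctional, LinearMap.comp_apply, Fintype.linearCombination_apply_single,
    one_smul, modByMonicHom_apply, lcoeff_apply, LinearMap.zero_apply,
    (modByMonic_eq_self_iff hb).mpr hdeg, hcoeff] at this
  exact hpj (leadingCoeff_eq_zero.mp this)

variable {E U : Set ℂ} {f : Fin d → ℂ → ℂ} {a : ℕ → ℂ[X]} {T : Fin d → ℂ[X] →ₗ[ℂ] ℂ[X]}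

theorem dvd_sum_mul_sub_mul {b q P : ℂ[X]} (hb : b.Monic) (hU : IsOpen U)
    (hroots : ∀ r ∈ b.roots, r ∈ U) {R : Fin d → ℂ[X]}
    (hR : ∀ k, IsHermiteInterpolant U b (fun z => q.eval z * f k z) (R k))
    {p : Fin d → ℂ[X]} (hP : ∀ z ∈ U, ∑ k, (p k).eval z * f k z = P.eval z) :
    b ∣ ∑ k, p k * R k - q * P := by
  choose h hh he using fun k => (hR k).2
  refine hb.dvd_of_eval_eq_mul hU hroots (h := fun z => -∑ k, (p k).eval z * h k z)
    (continuousOn_finsetSum _ fun k _ => (p k).continuousOn.mul (hh k).continuousOn).neg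
    fun z hz => ?_
  simp only [eval_sub, eval_finsetSum, eval_mul, ← hP z hz, Finset.mul_sum,
    ← Finset.sum_neg_distrib, ← Finset.sum_sub_distrib]
  exact Finset.sum_congr rfl fun k _ => by linear_combination -(p k).eval z * he k z hz

theorem relationFunctional_highCoeffs (p : Fin d → ℂ[X]) (b q : ℂ[X]) :
    relationFunctional m n p b (highCoeffs m n T q) = ((∑ k, p k *
      ∑ t ∈ Finset.Ico (n - m k + 1) (n + 1), C ((T k q).coeff t) * X ^ t) %ₘ b).coeff n := by
  simp only [relationFunctional, highCoeffs, LinearMap.comp_apply, Fintype.linearCombination_apply,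
    LinearMap.pi_apply, lcoeff_apply, Fintype.sum_sigma, Finset.mul_sum, modByMonicHom_apply]
  congr 2
  refine Finset.sum_congr rfl fun k _ => ?_
  refine (Finset.sum_coe_sort _ (fun t => (T k q).coeff t • (p k * X ^ t))).trans ?_
  exact Finset.sum_congr rfl fun t _ => by rw [smul_eq_C_mul]; ring

/-- Modulo `b`, `∑ p_k T_k q ≡ q P`, and the parts of the `T_k q` of degree `≤ n - m_k`
contribute only to degrees `< n`. -/
theorem relationFunctional_highCoeffs_eq_zero {b q P : ℂ[X]} (hb : b.Monic)
    (hbdeg : b.natDegree = n + 1) (hU : IsOpen U) (hroots : ∀ r ∈ b.roots, r ∈ U)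
    (hT : ∀ k, IsHermiteInterpolant U b (fun z => q.eval z * f k z) (T k q))
    {p : Fin d → ℂ[X]} (hpdeg : ∀ k, (p k).degree < m k)
    (hP : ∀ z ∈ U, ∑ k, (p k).eval z * f k z = P.eval z)
    (hqP : q.natDegree + P.natDegree < n) (hmn : ∀ k, m k ≤ n) :
    relationFunctional m n p b (highCoeffs m n T q) = 0 := by
  set high := fun k => ∑ t ∈ Finset.Ico (n - m k + 1) (n + 1), C ((T k q).coeff t) * X ^ t
  have hlow : ∀ k, (p k * (T k q - high k)).natDegree ≤ n - 1 := by
    intro k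
    rcases eq_or_ne (p k) 0 with hpk | hpk
    · simp [hpk]
    have hpk' := (natDegree_lt_iff_degree_lt hpk).mpr (hpdeg k)
    have hTk : (T k q).natDegree ≤ n := by
      rcases eq_or_ne (T k q) 0 with h0 | h0
      · simp [h0]
      · have := natDegree_lt_natDegree h0 (hT k).1
        omega
    have : (T k q - high k).natDegree ≤ n - m k := natDegree_sub_sum_Ico_le hTk
    have := hmn k
    exact natDegree_mul_le.trans (by omega)
  rw [relationFunctional_highCoeffs]
  refine coeff_modByMonic_eq_zero_of_dvd_sub hb (B := q * P - ∑ k, p k * (T k q - high k))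
    ?_ ?_ (by omega)
  · convert dvd_sum_mul_sub_mul hb hU hroots hT hP using 1
    simp only [mul_sub, Finset.sum_sub_distrib]
    ring
  · refine (natDegree_sub_le _ _).trans_lt (max_lt (natDegree_mul_le.trans_lt hqP) ?_)
    exact (natDegree_sum_le_of_forall_le _ _ fun k _ => hlow k).trans_lt (by omega)

theorem isMHPDenominator_of_highCoeffs_eq_zero (hU : IsOpen U) (hEU : E ⊆ U)
    (hdeg : (a (n + 1)).natDegree = n + 1) {Q : ℂ[X]}
    (hT : ∀ k, IsHermiteInterpolant U (a (n + 1)) (fun z => Q.eval z * f k z) (T k Q))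
    (hQ : Q ≠ 0) (hQdeg : Q.natDegree ≤ ∑ k, m k) (hQT : highCoeffs m n T Q = 0) :
    IsMHPDenominator E U d f m a n Q := by
  refine ⟨hQ, hQdeg, fun k => ⟨T k Q, degree_le_of_natDegree_le ?_, U, hU, hEU, subset_rfl, ?_⟩⟩
  · refine natDegree_le_iff_coeff_eq_zero.mpr fun t ht => ?_
    by_cases htn : t ≤ n
    · exact congr_fun hQT ⟨k, t, Finset.mem_Ico.mpr ⟨by omega, by omega⟩⟩
    · refine coeff_eq_zero_of_degree_lt ((hT k).1.trans_le ?_)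
      exact (degree_le_of_natDegree_le hdeg.le).trans (by exact_mod_cast (by omega : n + 1 ≤ t))
  · obtain ⟨h, hh, he⟩ := (hT k).2
    exact ⟨h, hh, fun z hz => by linear_combination he z hz⟩

theorem exists_monic_isMHPDenominator_of_highCoeffs_eq_zero (hU : IsOpen U) (hEU : E ⊆ U)
    (hdeg : (a (n + 1)).natDegree = n + 1)
    (hT : ∀ k q, IsHermiteInterpolant U (a (n + 1)) (fun z => q.eval z * f k z) (T k q))
    {S : ℂ[X]} (hS : S ≠ 0) (hSdeg : S.natDegree ≤ ∑ k, m k) (hST : highCoeffs m n T S = 0) :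
    ∃ Q : ℂ[X], Q.Monic ∧ Q.natDegree = S.natDegree ∧ IsMHPDenominator E U d f m a n Q := by
  have hc : S.leadingCoeff⁻¹ ≠ 0 := inv_ne_zero (leadingCoeff_ne_zero.mpr hS)
  refine ⟨S * C S.leadingCoeff⁻¹, monic_mul_leadingCoeff_inv hS, natDegree_mul_C hc,
    isMHPDenominator_of_highCoeffs_eq_zero hU hEU hdeg (fun k => hT k _)
      (mul_ne_zero hS (C_ne_zero.mpr hc)) ((natDegree_mul_C hc).trans_le hSdeg) ?_⟩
  rw [mul_comm, ← smul_eq_C_mul, map_smul, hST, smul_zero]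

end HermitePade

theorem stmt12_general (E : Set ℂ)
    (U : Set ℂ) (hU : IsOpen U) (hEU : E ⊆ U)
    (d : ℕ) (f : Fin d → ℂ → ℂ) (hf : ∀ k, DifferentiableOn ℂ (f k) U)
    (m : Fin d → ℕ)
    (a : ℕ → ℂ[X]) (haM : ∀ n, (a n).Monic) (hadeg : ∀ n, (a n).natDegree = n)
    (haroots : ∀ n, ∀ w : ℂ, (a n).IsRoot w → w ∈ E)
    (n₀ : ℕ)
    (huniq : ∀ n ≥ n₀, ∃ Q : ℂ[X], Q.Monic ∧ Q.natDegree = ∑ k, m k ∧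
      IsMHPDenominator E U d f m a n Q ∧
      ∀ Q' : ℂ[X], Q'.Monic → IsMHPDenominator E U d f m a n Q' → Q' = Q) :
    ¬ ∃ p : Fin d → ℂ[X], (∃ k, p k ≠ 0) ∧ (∀ k, (p k).degree < (m k : ℕ)) ∧
      ∃ P : ℂ[X], ∀ z ∈ U, ∑ k, (p k).eval z * f k z = P.eval z := by
  rintro ⟨p, ⟨j, hpj⟩, hpdeg, P, hP⟩
  set M := ∑ k, m k
  set n := max n₀ (M + P.natDegree + 1)
  have hmn : ∀ k, m k ≤ n := fun k =>
    (Finset.single_le_sum (fun k _ => (m k).zero_le) (Finset.mem_univ k)).trans (by omega)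
  obtain ⟨Q, -, hQdeg, -, hQuniq⟩ := huniq n (le_max_left _ _)
  have hb := haM (n + 1)
  have hroots : ∀ r ∈ (a (n + 1)).roots, r ∈ U :=
    fun r hr => hEU (haroots _ r (isRoot_of_mem_roots hr))
  choose T hT using fun k => hb.exists_linearMap_isHermiteInterpolant hU hroots (hf k)
  obtain ⟨⟨S, hSM⟩, hS0, hST⟩ := LinearMap.exists_ne_zero_map_eq_zero_of_comp_eq_zero
    (L := highCoeffs m n T ∘ₗ (degreeLT ℂ M).subtype)
    (relationFunctional_ne_zero hb (hadeg _) hpdeg hpj (hmn j))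
    (LinearMap.ext fun q => relationFunctional_highCoeffs_eq_zero hb (hadeg _) hU hroots
      (fun k => hT k q) hpdeg hP
      (by have := natDegree_le_of_degree_le (mem_degreeLT.mp q.2).le; omega) hmn)
    (by rw [finrank_fintype_fun_eq_card, card_highIndex hmn, (degreeLTEquiv ℂ M).finrank_eq,
      finrank_fin_fun])
  replace hS0 : S ≠ 0 := fun h => hS0 (Subtype.ext h)
  have hSdeg : S.natDegree < M := (natDegree_lt_iff_degree_lt hS0).mpr (mem_degreeLT.mp hSM)
  obtain ⟨Q', hQ'mon, hQ'deg, hQ'⟩ := exists_monic_isMHPDenominator_of_highCoeffs_eq_zero hU hEU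
    (hadeg _) hT hS0 hSdeg.le (by simpa using hST)
  rw [← hQuniq Q' hQ'mon hQ'] at hQdeg
  omega

/-- Lemma 2.  If for all `n ≥ n₀` the monic common denominator `Q_{n,m}` of the multipoint
Hermite–Padé approximants of `f` is unique and has degree exactly `|m|`, then `f` is
polynomially independent with respect to `m`. -/
theorem stmt12 (E : Set ℂ) (hE : IsCompact E) (hEconn : IsConnected E)
    (hEc : IsConnected Eᶜ)
    (U : Set ℂ) (hU : IsOpen U) (hEU : E ⊆ U)
    (d : ℕ) (f : Fin d → ℂ → ℂ) (hf : ∀ k, DifferentiableOn ℂ (f k) U)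
    (m : Fin d → ℕ) (hm : ∀ k, 0 < m k)
    (a : ℕ → ℂ[X]) (haM : ∀ n, (a n).Monic) (hadeg : ∀ n, (a n).natDegree = n)
    (haroots : ∀ n, ∀ w : ℂ, (a n).IsRoot w → w ∈ E)
    (n₀ : ℕ)
    (huniq : ∀ n ≥ n₀, ∃ Q : ℂ[X], Q.Monic ∧ Q.natDegree = ∑ k, m k ∧
      IsMHPDenominator E U d f m a n Q ∧
      ∀ Q' : ℂ[X], Q'.Monic → IsMHPDenominator E U d f m a n Q' → Q' = Q) :
    ¬ ∃ p : Fin d → ℂ[X], (∃ k, p k ≠ 0) ∧ (∀ k, (p k).degree < (m k : ℕ)) ∧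
      ∃ P : ℂ[X], ∀ z ∈ U, ∑ k, (p k).eval z * f k z = P.eval z :=
  stmt12_general E U hU hEU d f hf m a haM hadeg haroots n₀ huniq
end

section
/- Suppose F(w) = Σ_{n=−∞}^{∞} F_n w^n is a Laurent series convergent in |w| > 1, and write F = F₁ + F₂ with F₁(w) = Σ_{n≥0} F_n w^n having infinite radius of convergence. Suppose α_n (n ≥ 1) are holomorphic in the exterior of some disk (including ∞), converge there to α with α(∞) ≠ 0, and [F₁ α_n]_{n−m} = 0 for all sufficiently large n and a fixed m. Then F₁ is a polynomial. -/
open Filter Metric Topology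

/-!
Suppose `F₁` is not a polynomial. Since it is entire, for every `ε > 0` the numbers
`|F_k| ε^{-k}` tend to `0`, so beyond any index there is a `k` with `F_k ≠ 0` that dominates
all later coefficients: `|F_{k+p}| ≤ |F_k| ε^p`. For large `n` the `α_n` are uniformly bounded
by some `M` on a fixed circle around `∞` of radius `1/R`, and `|α_n(∞)| ≥ c > 0`; Cauchy's
estimates give `|α_{n,-p}| ≤ M R^{-p}`. In `[F₁ α_n]_{n-m} = 0` with `n = k + m`, the leading
term `α_{n,0} F_k` has size at least `c |F_k|`, while the others add up to at most
`M |F_k| q / (1 - q)` with `q = ε / R`. Choosing `q` small forces `F_k = 0`.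
-/

lemma norm_le_of_hasSum_zero_of_geometric_tail {E : Type*} [NormedAddCommGroup E] {f : ℕ → E}
    {B q : ℝ} (hf : HasSum f 0) (hq₀ : 0 ≤ q) (hq₁ : q < 1)
    (htail : ∀ p, ‖f (p + 1)‖ ≤ B * q ^ (p + 1)) :
    ‖f 0‖ ≤ B * q / (1 - q) := by
  have htail_sum : HasSum (fun p => f (p + 1)) (-f 0) := by
    simpa using (hasSum_nat_add_iff' 1).mpr hf
  have hgeom : HasSum (fun p => B * q ^ (p + 1)) (B * q / (1 - q)) := by
    simpa only [pow_succ', ← mul_assoc, div_eq_mul_inv] using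
      (hasSum_geometric_of_lt_one hq₀ hq₁).mul_left (B * q)
  rw [← norm_neg, ← htail_sum.tsum_eq]
  exact tsum_of_norm_bounded hgeom htail

lemma exists_pos_lt_one_mul_div_one_sub_lt (M : ℝ) {c : ℝ} (hc : 0 < c) :
    ∃ q, 0 < q ∧ q < 1 ∧ M * q / (1 - q) < c := by
  have hcont : ContinuousAt (fun q : ℝ => M * q / (1 - q)) 0 :=
    ContinuousAt.div (by fun_prop) (by fun_prop) (by norm_num)
  have hsmall : ∀ᶠ q in 𝓝 (0 : ℝ), M * q / (1 - q) < c :=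
    hcont.eventually (gt_mem_nhds (by simpa using hc))
  exact ((gt_mem_nhds one_pos).and hsmall).exists_gt

lemma exists_ge_forall_le_of_tendsto_zero {b : ℕ → ℝ} (hb : Tendsto b atTop (𝓝 0)) {N j : ℕ}
    (hj : N ≤ j) (hbj : 0 < b j) : ∃ k ≥ N, ∀ i ≥ N, b i ≤ b k := by
  have hshift : Tendsto (fun i => b (i + N)) (cocompact ℕ) (𝓝 0) := by
    rw [cocompact_eq_atTop]
    exact hb.comp (tendsto_add_atTop_nat N)
  obtain ⟨k, hk⟩ := continuous_of_discreteTopology.exists_forall_ge' (j - N)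
    (hshift.eventually (ge_mem_nhds (by simpa [Nat.sub_add_cancel hj] using hbj)))
  refine ⟨k + N, by omega, fun i hi => ?_⟩
  simpa [Nat.sub_add_cancel hi] using hk (i - N)

lemma exists_dominant_coeff {a : ℕ → ℂ} (ha : ∀ z : ℂ, Summable fun k => a k * z ^ k)
    (hfreq : ∃ᶠ k in atTop, a k ≠ 0) {ε : ℝ} (hε : 0 < ε) (N : ℕ) :
    ∃ k ≥ N, a k ≠ 0 ∧ ∀ p, ‖a (k + p)‖ ≤ ‖a k‖ * ε ^ p := by
  set b : ℕ → ℝ := fun k => ‖a k‖ * ε⁻¹ ^ k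
  have hb : Tendsto b atTop (𝓝 0) := by
    have := (ha (ε : ℂ)⁻¹).tendsto_atTop_zero.norm
    simpa [b, norm_mul, norm_pow, norm_inv, Complex.norm_real, abs_of_pos hε] using this
  obtain ⟨j, hjN, hj⟩ := frequently_atTop.mp hfreq N
  obtain ⟨k, hkN, hk⟩ := exists_ge_forall_le_of_tendsto_zero hb hjN (by positivity)
  refine ⟨k, hkN, fun hk0 => ?_, fun p => ?_⟩
  · have : b j ≤ 0 := by simpa [b, hk0] using hk j hjN
    exact (this.trans_lt (by positivity : (0:ℝ) < b j)).false
  · have h := hk (k + p) (by omega)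
    simp only [b, pow_add, inv_pow] at h
    rwa [← div_eq_mul_inv, ← div_eq_mul_inv, ← div_div, div_right_comm,
      div_le_div_iff_of_pos_right (by positivity), div_le_iff₀ (by positivity)] at h

lemma TendstoUniformlyOn.eventually_forall_norm_le {ι α E : Type*} [TopologicalSpace α]
    [SeminormedAddCommGroup E] {g : ι → α → E} {f : α → E} {l : Filter ι} {K : Set α}
    (hg : TendstoUniformlyOn g f l K) (hK : IsCompact K) (hf : ContinuousOn f K) :
    ∃ M, ∀ᶠ n in l, ∀ x ∈ K, ‖g n x‖ ≤ M := by
  obtain ⟨C, hC⟩ := hK.exists_bound_of_continuousOn hf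
  refine ⟨C + 1, ?_⟩
  filter_upwards [tendstoUniformlyOn_iff.mp hg 1 one_pos] with n hn x hx
  calc ‖g n x‖ ≤ ‖f x‖ + ‖g n x - f x‖ := norm_le_norm_add_norm_sub' _ _
    _ ≤ C + 1 := by
      rw [← dist_eq_norm, dist_comm]
      exact add_le_add (hC x hx) (hn x hx).le

lemma norm_iteratedDeriv_div_factorial_le {f : ℂ → ℂ} {c : ℂ} {R C : ℝ} (p : ℕ) (hR : 0 < R)
    (hf : DiffContOnCl ℂ f (ball c R)) (hC : ∀ z ∈ sphere c R, ‖f z‖ ≤ C) :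
    ‖iteratedDeriv p f c / p.factorial‖ ≤ C / R ^ p := by
  rw [norm_div, Complex.norm_natCast, div_le_iff₀ (by positivity), div_mul_eq_mul_div, mul_comm]
  exact Complex.norm_iteratedDeriv_le_of_forall_mem_sphere_norm_le p hR hf hC

lemma eq_zero_of_hasSum_mul_eq_zero {a x : ℕ → ℂ} {M c R q : ℝ}
    (hsum : HasSum (fun p => a p * x p) 0) (ha : ∀ p, ‖a p‖ ≤ M / R ^ p) (ha₀ : c ≤ ‖a 0‖)
    (hx : ∀ p, ‖x p‖ ≤ ‖x 0‖ * (R * q) ^ p) (hR : 0 < R) (hq₀ : 0 ≤ q) (hq₁ : q < 1)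
    (hqc : M * q / (1 - q) < c) : x 0 = 0 := by
  have htail : ∀ p, ‖a (p + 1) * x (p + 1)‖ ≤ M * ‖x 0‖ * q ^ (p + 1) := fun p =>
    calc ‖a (p + 1) * x (p + 1)‖ ≤ M / R ^ (p + 1) * (‖x 0‖ * (R * q) ^ (p + 1)) := by
          rw [norm_mul]
          exact mul_le_mul (ha _) (hx _) (norm_nonneg _) ((norm_nonneg _).trans (ha _))
      _ = M * ‖x 0‖ * q ^ (p + 1) := by
          field_simp
          ring
  have hhead := norm_le_of_hasSum_zero_of_geometric_tail hsum hq₀ hq₁ htail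
  by_contra hx₀
  have hx₀ : 0 < ‖x 0‖ := norm_pos_iff.mpr hx₀
  rw [norm_mul] at hhead
  have : c * ‖x 0‖ < c * ‖x 0‖ :=
    calc c * ‖x 0‖ ≤ ‖a 0‖ * ‖x 0‖ := mul_le_mul_of_nonneg_right ha₀ hx₀.le
      _ ≤ M * ‖x 0‖ * q / (1 - q) := hhead
      _ = M * q / (1 - q) * ‖x 0‖ := by ring
      _ < c * ‖x 0‖ := mul_lt_mul_of_pos_right hqc hx₀
  exact lt_irrefl _ this

/-- The `α_n` are encoded as `g n v = α_n (1 / v)`, so `iteratedDeriv p (g n) 0 / p!` is `α_{n,-p}`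
and `galpha 0` is `α(∞)`. -/
theorem stmt15_general (Fc : ℕ → ℂ) (F1 : ℂ → ℂ)
    (hF1 : ∀ z : ℂ, HasSum (fun k => Fc k * z ^ k) (F1 z))
    (r : ℝ) (hr : 0 < r) (g : ℕ → ℂ → ℂ) (galpha : ℂ → ℂ)
    (hg : ∀ n, DifferentiableOn ℂ (g n) (Metric.ball (0:ℂ) r))
    (hconv : TendstoLocallyUniformlyOn g galpha atTop (Metric.ball (0:ℂ) r))
    (hga0 : galpha 0 ≠ 0)
    (m N : ℕ)
    (hpair : ∀ n ≥ N, HasSum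
      (fun p : ℕ => (iteratedDeriv p (g n) 0 / (p.factorial : ℂ)) * Fc (n - m + p)) 0) :
    ∃ D : ℕ, ∀ k > D, Fc k = 0 := by
  suffices ∀ᶠ k in atTop, Fc k = 0 by
    obtain ⟨D, hD⟩ := eventually_atTop.mp this
    exact ⟨D, fun k hk => hD k hk.le⟩
  by_contra hfreq
  rw [not_eventually] at hfreq
  have hR : 0 < r / 2 := half_pos hr
  have hRr : closedBall (0 : ℂ) (r / 2) ⊆ ball 0 r := closedBall_subset_ball (half_lt_self hr)
  have hU : TendstoUniformlyOn g galpha atTop (closedBall 0 (r / 2)) :=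
    (tendstoLocallyUniformlyOn_iff_forall_isCompact isOpen_ball).mp hconv _ hRr
      (isCompact_closedBall _ _)
  obtain ⟨M, hM⟩ := hU.eventually_forall_norm_le (isCompact_closedBall _ _)
    ((hconv.continuousOn (.of_forall fun n => (hg n).continuousOn)).mono hRr)
  have hα₀ : 0 < ‖galpha 0‖ := norm_pos_iff.mpr hga0
  have hlow : ∀ᶠ n in atTop, ‖galpha 0‖ / 2 ≤ ‖g n 0‖ :=
    (hU.tendsto_at (mem_closedBall_self hR.le)).norm.eventually_const_le (half_lt_self hα₀)
  obtain ⟨N₁, hN₁⟩ := eventually_atTop.mp (hM.and hlow)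
  obtain ⟨q, hq₀, hq₁, hqc⟩ := exists_pos_lt_one_mul_div_one_sub_lt M (half_pos hα₀)
  obtain ⟨k, hk, hFk, hdom⟩ :=
    exists_dominant_coeff (fun z => (hF1 z).summable) hfreq (mul_pos hR hq₀) (max N₁ N)
  obtain ⟨hgM, hgc⟩ := hN₁ (k + m) (by omega)
  have hsum := hpair (k + m) (by omega)
  rw [Nat.add_sub_cancel] at hsum
  refine hFk (eq_zero_of_hasSum_mul_eq_zero hsum (fun p => ?_) ?_ hdom hR hq₀.le hq₁ hqc)
  · exact norm_iteratedDeriv_div_factorial_le p hR ((hg _).diffContOnCl_ball hRr)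
      fun z hz => hgM z (sphere_subset_closedBall hz)
  · simpa using hgc

/-- Application of the Supplement to Buslaev's theorem.  `F = F₁ + F₂` is a Laurent series
convergent in `|w| > 1`, where `F₁(w) = Σ_{k≥0} F_k w^k` has infinite radius of
convergence (`HasSum` for every `w`).  The functions `α_n`, holomorphic in the exterior of
some disk including `∞`, are modeled by `g_n(v) = α_n(1/v)` holomorphic on the ball
`B(0,r)`, with Taylor coefficients `α_{n,-p} = g_n^{(p)}(0)/p!`; they converge locally
uniformly to `g` (i.e. to `α`) with `α(∞) = g(0) ≠ 0`.  If the pairing conditions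
`[F₁ α_n]_{n−m} = Σ_p α_{n,-p} F_{n−m+p} = 0` hold for all sufficiently large `n`,
then `F₁` is a polynomial. -/
theorem stmt15 (Fc : ℕ → ℂ) (F1 : ℂ → ℂ)
    (hF1 : ∀ z : ℂ, HasSum (fun k => Fc k * z ^ k) (F1 z))
    (F F2 : ℂ → ℂ)
    (hF2 : DifferentiableOn ℂ F2 {w : ℂ | 1 < ‖w‖})
    (hF : ∀ w : ℂ, 1 < ‖w‖ → F w = F1 w + F2 w)
    (r : ℝ) (hr : 0 < r) (g : ℕ → ℂ → ℂ) (galpha : ℂ → ℂ)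
    (hg : ∀ n, DifferentiableOn ℂ (g n) (Metric.ball (0:ℂ) r))
    (hconv : TendstoLocallyUniformlyOn g galpha atTop (Metric.ball (0:ℂ) r))
    (halpha : DifferentiableOn ℂ galpha (Metric.ball (0:ℂ) r))
    (hga0 : galpha 0 ≠ 0)
    (m N : ℕ) (hNm : m ≤ N)
    (hpair : ∀ n ≥ N, HasSum
      (fun p : ℕ => (iteratedDeriv p (g n) 0 / (p.factorial : ℂ)) * Fc (n - m + p)) 0) :
    ∃ D : ℕ, ∀ k > D, Fc k = 0 :=
  stmt15_general Fc F1 hF1 r hr g galpha hg hconv hga0 m N hpair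
end
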